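/- arXiv:1204.2519 — 3 statements merged into one kernel-verified Lean document; each statement's English description precedes it below -/
import Mathlib

section
/- Define the Kierstead coloring of K_{3m}: partition the vertex set into V_1, V_2, V_3 of size m each; an edge xy with x ∈ V_i, y ∈ V_j, i ≤ j, gets color i if j − i ≤ 1 and color 3 if (i,j) = (1,3). Then in this coloring, for every color c ∈ {1,2,3} and every finite set A of vertices, the set of vertices c-dominated by A has size at most 2m + |A|. -/
open Finset

/-- The set of colors appearing on edges incident with `v`. -/
def colorsAt {V : Type*} [Fintype V] [DecidableEq V]
    (col : V → V → Fin 3) (v : V) : Finset (Fin 3) :=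
  Finset.univ.filter (fun c => ∃ u, u ≠ v ∧ col v u = c)

/-- The set of vertices strongly `c`-dominated by `A`. -/
def sdom {V : Type*} [Fintype V] [DecidableEq V]
    (col : V → V → Fin 3) (A : Finset V) (c : Fin 3) : Finset V :=
  Finset.univ.filter (fun y => ∃ x ∈ A, x ≠ y ∧ col x y = c)

/-- The Kierstead coloring of the complete graph on `Fin 3 × Fin m`. -/
def kcol {m : ℕ} (x y : Fin 3 × Fin m) : Fin 3 :=
  if ((max x.1 y.1 : Fin 3) : ℕ) - ((min x.1 y.1 : Fin 3) : ℕ) ≤ 1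
  then min x.1 y.1 else 2

theorem stmt4 (m : ℕ) (c : Fin 3) (A : Finset (Fin 3 × Fin m)) :
    (Finset.univ.filter
      (fun y => y ∉ A ∧ ∃ x ∈ A, x ≠ y ∧ kcol x y = c)).card ≤ 2 * m + A.card := by
  classical
  have key : ∀ a b c : Fin 3,
      ((if ((max a b : Fin 3) : ℕ) - ((min a b : Fin 3) : ℕ) ≤ 1
        then min a b else (2 : Fin 3)) = c) → b = c ∨ b = c + 1 := by decide
  have hc : ∀ c : Fin 3, c ≠ c + 1 := by decide
  have hsub : (Finset.univ.filter
      (fun y : Fin 3 × Fin m => y ∉ A ∧ ∃ x ∈ A, x ≠ y ∧ kcol x y = c)) ⊆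
      ({c, c + 1} : Finset (Fin 3)) ×ˢ (Finset.univ : Finset (Fin m)) := by
    intro y hy
    simp only [mem_filter] at hy
    obtain ⟨-, -, x, hx, hxy, hcol⟩ := hy
    have := key x.1 y.1 c hcol
    simp only [mem_product, mem_insert, mem_singleton, mem_univ, and_true]
    exact this
  calc (Finset.univ.filter
      (fun y : Fin 3 × Fin m => y ∉ A ∧ ∃ x ∈ A, x ≠ y ∧ kcol x y = c)).card
      ≤ (({c, c + 1} : Finset (Fin 3)) ×ˢ (Finset.univ : Finset (Fin m))).card :=
        card_le_card hsub
    _ = 2 * m := by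
        rw [card_product, card_insert_of_notMem (by simpa using hc c),
          card_singleton, card_univ, Fintype.card_fin]
    _ ≤ 2 * m + A.card := Nat.le_add_right _ _
end

section
/- Suppose the edges of K_n are 3-colored and there is no set of at most 4 vertices strongly c-dominating at least 2n/3 vertices for any color c. If additionally every vertex is incident with edges of at most two colors, then a contradiction follows; i.e., under the two-colors-per-vertex condition, some set of exactly 2 vertices strongly c-dominates at least 2n/3 vertices for some color c (n ≥ 2). -/
/-!
Choose for every vertex `x` a colour `m x` missing at `x`. If `u` misses `a` and `v` misses
`b ≠ a`, every edge joining `u` or `v` to a vertex that misses `a` or `b` has the third colour `e`,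
so `{u, v}` strongly `e`-dominates every `x` with `m x ≠ e`. Taking for `e` the colour with the
smallest class `m⁻¹(e)` gives at least `2n/3` vertices, provided the two other classes are
nonempty. Otherwise `m` is constant, so only two colours occur. Then fix `u`: for `v ≠ u` the pair
`{u, v}` dominates, in colour `col u v`, the vertex `u`, the class of `v` at `u`, and every `y` with
`col v y = col u v`. Each edge between the two classes at `u` is counted for one of its ends, so
averaging over `v` and Cauchy–Schwarz on the class sizes yield a pair dominating `2n/3` vertices.
-/

open Finset

lemma sq_card_le_card_mul_sum_card_fiber {ι κ : Type*} [Fintype κ] [DecidableEq κ]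
    (s : Finset ι) (f : ι → κ) :
    #s ^ 2 ≤ Fintype.card κ * ∑ i ∈ s, #{j ∈ s | f j = f i} := by
  have hs : #s = ∑ k, #{i ∈ s | f i = k} := card_eq_sum_card_fiberwise (by simp)
  have hfib : ∑ i ∈ s, #{j ∈ s | f j = f i} = ∑ k, #{i ∈ s | f i = k} ^ 2 := by
    rw [← sum_fiberwise s f]
    refine sum_congr rfl fun k _ => ?_
    rw [sum_congr rfl fun i hi => by rw [(mem_filter.1 hi).2], sum_const, smul_eq_mul, sq]
  rw [hs, hfib]
  exact sq_sum_le_card_mul_sum_sq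

lemma card_mul_card_fiber_le {ι κ : Type*} [Fintype ι] [Fintype κ] [DecidableEq κ] (f : ι → κ)
    {e : κ} (he : ∀ k, #{i | f i = e} ≤ #{i | f i = k}) :
    Fintype.card κ * #{i | f i = e} ≤ Fintype.card ι := by
  calc Fintype.card κ * #{i | f i = e} ≤ ∑ k, #{i | f i = k} := by
        simpa using card_nsmul_le_sum univ (fun k => #{i | f i = k}) _ fun k _ => he k
    _ = Fintype.card ι := (card_eq_sum_card_fiberwise (by simp)).symm

lemma exists_eq_of_forall_card_fiber_le {ι : Type*} [Fintype ι] [Nonempty ι] (m : ι → Fin 3)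
    {e : Fin 3} (he : ∀ k, #{x | m x = e} ≤ #{x | m x = k}) (hm : ¬∃ d, ∀ x, m x = d)
    {k : Fin 3} (hke : k ≠ e) : ∃ x, m x = k := by
  by_contra! hk
  have he0 : ∀ x, m x ≠ e := by simpa [filter_eq_empty_iff, hk] using he k
  obtain ⟨x₀⟩ := ‹Nonempty ι›
  exact hm ⟨m x₀, fun x => by
    have := he0 x; have := hk x; have := he0 x₀; have := hk x₀; omega⟩

lemma sq_card_add_sum_card_fiber_le {V : Type*} {col : V → V → Fin 3}
    (hsym : ∀ x y, col x y = col y x) {a : Fin 3} (ha : ∀ x y, x ≠ y → col x y ≠ a)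
    (s : Finset V) {c : V → Fin 3} (hc : ∀ v ∈ s, c v ≠ a) :
    #s ^ 2 + ∑ v ∈ s, #{y ∈ s | c y = c v} ≤
      2 * ∑ v ∈ s, #{y ∈ s | c y = c v ∨ col v y = c v} := by
  -- if `c v ≠ c y`, the edge `v y` has one of the only two available colours `c v`, `c y`
  have hpair : ∀ v ∈ s, ∀ y ∈ s, 1 + (if c y = c v then 1 else 0) ≤
      (if c y = c v ∨ col v y = c v then 1 else 0) +
        (if c v = c y ∨ col y v = c y then 1 else 0) := by
    intro v hv y hy
    by_cases hcy : c y = c v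
    · simp [hcy]
    · have hvy : v ≠ y := by rintro rfl; exact hcy rfl
      have := ha v y hvy
      have := hc v hv
      have := hc y hy
      have := hsym v y
      split_ifs <;> omega
  calc #s ^ 2 + ∑ v ∈ s, #{y ∈ s | c y = c v}
      = ∑ v ∈ s, ∑ y ∈ s, (1 + if c y = c v then 1 else 0) := by
        simp only [card_filter, sum_add_distrib, sum_const, smul_eq_mul, mul_one, sq]
    _ ≤ ∑ v ∈ s, ∑ y ∈ s, ((if c y = c v ∨ col v y = c v then 1 else 0) +
          (if c v = c y ∨ col y v = c y then 1 else 0)) :=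
        sum_le_sum fun v hv => sum_le_sum fun y hy => hpair v hv y hy
    _ = 2 * ∑ v ∈ s, #{y ∈ s | c y = c v ∨ col v y = c v} := by
        simp only [card_filter, sum_add_distrib, two_mul]
        exact congrArg _ sum_comm

section

variable {V : Type*} [Fintype V] [DecidableEq V] {col : V → V → Fin 3}

lemma col_mem_colorsAt {u v : V} (h : u ≠ v) : col v u ∈ colorsAt col v := by
  simp only [colorsAt, mem_filter, mem_univ, true_and]
  exact ⟨u, h, rfl⟩

lemma exists_notMem_colorsAt (hcol : ∀ v, #(colorsAt col v) ≤ 2) (v : V) :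
    ∃ c, c ∉ colorsAt col v := by
  obtain ⟨c, -, hc⟩ := exists_mem_notMem_of_card_lt_card (s := colorsAt col v) (t := univ)
    (by simpa using (hcol v).trans_lt (by norm_num))
  exact ⟨c, hc⟩

lemma col_eq_of_notMem_colorsAt (hsym : ∀ x y, col x y = col y x) {x y : V} (hxy : x ≠ y)
    {a b e : Fin 3} (hab : a ≠ b) (hea : e ≠ a) (heb : e ≠ b)
    (hx : a ∉ colorsAt col x) (hy : b ∉ colorsAt col y) : col x y = e := by
  have hxa : col x y ≠ a := fun h => hx (h ▸ col_mem_colorsAt hxy.symm)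
  have hyb : col x y ≠ b := fun h => hy (h ▸ hsym y x ▸ col_mem_colorsAt hxy)
  omega

lemma mem_sdom_pair (hsym : ∀ x y, col x y = col y x) {u v y : V} (huv : u ≠ v)
    {a b e : Fin 3} (hab : a ≠ b) (hea : e ≠ a) (heb : e ≠ b)
    (hu : a ∉ colorsAt col u) (hv : b ∉ colorsAt col v)
    (hy : a ∉ colorsAt col y ∨ b ∉ colorsAt col y) : y ∈ sdom col {u, v} e := by
  simp only [sdom, mem_filter, mem_univ, true_and, mem_insert, mem_singleton,
    exists_eq_or_imp, exists_eq_left]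
  rcases hy with hy | hy
  · by_cases hyv : y = v
    · subst hyv
      exact .inl ⟨huv, col_eq_of_notMem_colorsAt hsym huv hab hea heb hu hv⟩
    · exact .inr ⟨Ne.symm hyv,
        col_eq_of_notMem_colorsAt hsym (Ne.symm hyv) hab.symm heb hea hv hy⟩
  · by_cases hyu : y = u
    · subst hyu
      exact .inr ⟨huv.symm, col_eq_of_notMem_colorsAt hsym huv.symm hab.symm heb hea hv hu⟩
    · exact .inl ⟨Ne.symm hyu, col_eq_of_notMem_colorsAt hsym (Ne.symm hyu) hab hea heb hu hy⟩

lemma filter_ne_subset_sdom_pair (hsym : ∀ x y, col x y = col y x) {m : V → Fin 3}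
    (hm : ∀ x, m x ∉ colorsAt col x) {u v : V} {e : Fin 3} (hue : m u ≠ e) (hve : m v ≠ e)
    (huv : m u ≠ m v) : ({x | m x ≠ e} : Finset V) ⊆ sdom col {u, v} e := fun y hy => by
  have hy : m y ≠ e := (mem_filter.1 hy).2
  refine mem_sdom_pair hsym (fun h => huv (congrArg m h)) huv hue.symm hve.symm (hm u) (hm v) ?_
  rcases (by omega : m y = m u ∨ m y = m v) with h | h
  · exact .inl (h ▸ hm y)
  · exact .inr (h ▸ hm y)

lemma one_add_card_le_card_sdom_pair (hsym : ∀ x y, col x y = col y x) {u v : V} (hvu : v ≠ u) :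
    1 + #{y ∈ univ.erase u | col u y = col u v ∨ col v y = col u v} ≤
      #(sdom col {u, v} (col u v)) := by
  have hsub : insert u {y ∈ univ.erase u | col u y = col u v ∨ col v y = col u v} ⊆
      sdom col {u, v} (col u v) := by
    intro y hy
    simp only [mem_insert, mem_filter, mem_erase, mem_univ, and_true] at hy
    simp only [sdom, mem_filter, mem_univ, true_and, mem_insert, mem_singleton,
      exists_eq_or_imp, exists_eq_left]
    rcases hy with rfl | ⟨hyu, hy | hy⟩
    · exact .inr ⟨hvu, hsym _ _⟩
    · exact .inl ⟨Ne.symm hyu, hy⟩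
    · by_cases hvy : v = y
      · subst hvy
        exact .inl ⟨Ne.symm hyu, rfl⟩
      · exact .inr ⟨hvy, hy⟩
  calc 1 + #{y ∈ univ.erase u | col u y = col u v ∨ col v y = col u v}
      = #(insert u {y ∈ univ.erase u | col u y = col u v ∨ col v y = col u v}) := by
        rw [card_insert_of_notMem (by simp), add_comm]
    _ ≤ _ := card_le_card hsub

theorem exists_dominating_pair_of_forall_col_ne (hV : 2 ≤ Fintype.card V)
    (hsym : ∀ x y, col x y = col y x) {a : Fin 3} (ha : ∀ x y, x ≠ y → col x y ≠ a) :
    ∃ u v, u ≠ v ∧ 2 * Fintype.card V ≤ 3 * #(sdom col {u, v} (col u v)) := by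
  obtain ⟨u⟩ : Nonempty V := Fintype.card_pos_iff.1 (by omega)
  set s := univ.erase u
  have hs : #s + 1 = Fintype.card V := card_erase_add_one (mem_univ u)
  have hcs := sq_card_le_card_mul_sum_card_fiber s (col u)
  have hsq := sq_card_add_sum_card_fiber_le hsym ha s fun v hv => ha u v (ne_of_mem_erase hv).symm
  have hdom := sum_le_sum (s := s) fun v hv =>
    one_add_card_le_card_sdom_pair hsym (ne_of_mem_erase hv : v ≠ u)
  rw [Fintype.card_fin] at hcs
  rw [sum_add_distrib, sum_const, smul_eq_mul, mul_one] at hdom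
  -- with `m = #s`, `E`, `N` the two sums: `m² ≤ 3E` and `m² + E ≤ 2N` give `3N ≥ 2m²`,
  -- so `3 (m + N) ≥ 2m (m + 1)`
  have hsum : ∑ v ∈ s, 2 * Fintype.card V ≤ ∑ v ∈ s, 3 * #(sdom col {u, v} (col u v)) := by
    rw [sum_const, smul_eq_mul, ← mul_sum]
    nlinarith
  obtain ⟨v, hv, hle⟩ := exists_le_of_sum_le (card_pos.1 (by omega)) hsum
  exact ⟨u, v, (ne_of_mem_erase hv).symm, hle⟩

end

theorem stmt11 (n : ℕ) (hn : 2 ≤ n) (col : Fin n → Fin n → Fin 3)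
    (hsym : ∀ x y, col x y = col y x)
    (hcol : ∀ v, (colorsAt col v).card ≤ 2) :
    ∃ (c : Fin 3) (A : Finset (Fin n)),
      A.card = 2 ∧ 2 * n ≤ 3 * (sdom col A c).card := by
  choose m hm using exists_notMem_colorsAt hcol
  by_cases hconst : ∃ d, ∀ x, m x = d
  · obtain ⟨d, hd⟩ := hconst
    obtain ⟨u, v, huv, h⟩ := exists_dominating_pair_of_forall_col_ne (by simpa using hn) hsym
      (a := d) fun x y hxy hc => hm x (hd x ▸ hc ▸ col_mem_colorsAt hxy.symm)
    exact ⟨col u v, {u, v}, card_pair huv, by simpa using h⟩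
  have : Nonempty (Fin n) := ⟨⟨0, by omega⟩⟩
  obtain ⟨e, -, he⟩ := exists_min_image univ (fun k => #{x | m x = k}) univ_nonempty
  have he : ∀ k, #{x | m x = e} ≤ #{x | m x = k} := fun k => he k (mem_univ k)
  obtain ⟨u, hu⟩ := exists_eq_of_forall_card_fiber_le m he hconst (k := e + 1) (by omega)
  obtain ⟨v, hv⟩ := exists_eq_of_forall_card_fiber_le m he hconst (k := e + 2) (by omega)
  have hsub := filter_ne_subset_sdom_pair hsym hm (by omega : m u ≠ e) (by omega : m v ≠ e)
    (by omega : m u ≠ m v)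
  have hsplit : #{x | m x = e} + #{x | m x ≠ e} = n := by
    simpa using card_filter_add_card_filter_not (s := univ) (fun x => m x = e)
  have hmin := card_mul_card_fiber_le m he
  rw [Fintype.card_fin, Fintype.card_fin] at hmin
  refine ⟨e, {u, v}, card_pair fun h => by subst h; omega, ?_⟩
  have := card_le_card hsub
  omega
end

section
/- For any 3-coloring of the edges of K_n with n ≥ 2, assuming that no vertex is incident with edges of all three colors, there exist a color c and a set A of at most 4 vertices that strongly c-dominates at least 2n/3 vertices. -/
open Finset

/-!
Every vertex `v` misses some colour `m v`, and an edge `xy` avoids both `m x` and `m y`. Let `c` be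
a colour with the smallest fibre under `m`. If the two other colours are attained, at `u` and `v`,
then each `y` outside the fibre of `c` is joined in colour `c` to whichever of `u, v` misses a
colour other than `m y`, so `{u, v}` strongly `c`-dominates these at least `2n/3` vertices. Otherwise `m` is constant and only two colours `b, c` occur. Fix `x`, with
neighbourhoods `N_b, N_c` in the two colours. If some `w ∈ N_b` has at most `n/3` `c`-neighbours in
`N_c`, then `{x, w}` strongly `b`-dominates all other vertices, and symmetrically for `v ∈ N_c`.
Otherwise, counting the edges between `N_b` and `N_c` by colour gives
`(n - 1)(n + 1) ≤ 3|N_b||N_c| ≤ 3(n - 1)² / 4`, which fails for `n ≥ 2`.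
-/

lemma fin_three_eq_of_ne {a b c d : Fin 3} (hab : a ≠ b) (hac : a ≠ c) (hbc : b ≠ c)
    (hda : d ≠ a) (hdb : d ≠ b) : d = c := by
  omega

lemma fin_three_exists_pair_ne (c : Fin 3) : ∃ a b : Fin 3, a ≠ b ∧ a ≠ c ∧ b ≠ c := by
  revert c
  decide

lemma three_mul_mul_lt_add_mul_succ {p q n : ℕ} (hpq : p + q + 1 = n) (hn : 2 ≤ n) :
    3 * (p * q) < (p + q) * (n + 1) := by
  subst hpq
  nlinarith [sq_nonneg ((p : ℤ) - q)]

lemma exists_const_or_small_fiber {V : Type*} [Fintype V] (m : V → Fin 3) :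
    (∃ d, ∀ y, m y = d) ∨ ∃ c u v, m u ≠ m v ∧ m u ≠ c ∧ m v ≠ c ∧
      3 * #{y | m y = c} ≤ Fintype.card V := by
  obtain ⟨c, -, hmin⟩ := exists_min_image univ (fun d => #{y | m y = d}) univ_nonempty
  have hsmall : 3 * #{y | m y = c} ≤ Fintype.card V :=
    calc 3 * #{y | m y = c} = #(univ : Finset (Fin 3)) • #{y | m y = c} := by simp
      _ ≤ ∑ d, #{y | m y = d} := card_nsmul_le_sum _ _ _ fun d _ => hmin d (mem_univ d)
      _ = Fintype.card V := (card_eq_sum_card_fiberwise fun y _ => mem_univ (m y)).symm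
  -- by minimality of the fibre of `c`
  have hmiss : ∀ d, (¬∃ y, m y = d) → ∀ y, m y ≠ d ∧ m y ≠ c := by
    intro d hd y
    have hd' : #{y | m y = d} = 0 := by simpa [filter_eq_empty_iff] using hd
    have hc : ({y | m y = c} : Finset V) = ∅ :=
      card_eq_zero.1 (Nat.le_zero.1 (hd' ▸ hmin d (mem_univ d)))
    exact ⟨fun h => hd ⟨y, h⟩, filter_eq_empty_iff.1 hc (mem_univ y)⟩
  obtain ⟨a, b, hab, hac, hbc⟩ := fin_three_exists_pair_ne c
  by_cases ha : ∃ u, m u = a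
  · by_cases hb : ∃ v, m v = b
    · obtain ⟨⟨u, rfl⟩, ⟨v, rfl⟩⟩ := And.intro ha hb
      exact Or.inr ⟨c, u, v, hab, hac, hbc, hsmall⟩
    · exact Or.inl ⟨a, fun y => fin_three_eq_of_ne hbc hab.symm hac.symm (hmiss b hb y).1
        (hmiss b hb y).2⟩
  · exact Or.inl ⟨b, fun y => fin_three_eq_of_ne hac hab hbc.symm (hmiss a ha y).1
      (hmiss a ha y).2⟩

lemma col_eq_of_missing {V : Type*} {col : V → V → Fin 3} (hsym : ∀ x y, col x y = col y x)
    {m : V → Fin 3} (hm : ∀ u v, u ≠ v → col u v ≠ m u) {x y : V} {c : Fin 3}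
    (hxy : m x ≠ m y) (hx : m x ≠ c) (hy : m y ≠ c) : col x y = c :=
  have hne : x ≠ y := fun h => hxy (congrArg m h)
  fin_three_eq_of_ne hxy hx hy (hm x y hne) (hsym x y ▸ hm y x hne.symm)

lemma sum_card_filter_add_sum_card_filter_eq_mul {V : Type*} {col : V → V → Fin 3}
    (hsym : ∀ x y, col x y = col y x) {b c : Fin 3} (hbc : b ≠ c) {S T : Finset V}
    (h2 : ∀ w ∈ S, ∀ v ∈ T, col w v = b ∨ col w v = c) :
    ∑ w ∈ S, #(T.filter (fun y => col w y = c)) + ∑ v ∈ T, #(S.filter (fun y => col v y = b)) =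
      #S * #T := by
  have hswap : ∑ v ∈ T, #(S.filter (fun y => col v y = b)) =
      ∑ w ∈ S, #(T.filter (fun y => col w y = b)) := by
    refine (sum_congr rfl fun v _ => ?_).trans
      (sum_card_bipartiteAbove_eq_sum_card_bipartiteBelow (fun w v => col w v = b)).symm
    simp only [bipartiteBelow, hsym v]
  rw [hswap, ← sum_add_distrib, ← smul_eq_mul, ← sum_const]
  refine sum_congr rfl fun w hw => ?_
  have hb : T.filter (fun y => col w y = b) = T.filter (fun y => ¬col w y = c) :=
    filter_congr fun v hv => ⟨fun h h' => hbc (h.symm.trans h'), (h2 w hw v hv).resolve_right⟩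
  rw [hb, card_filter_add_card_filter_not]

section

variable {V : Type*} [Fintype V] [DecidableEq V] {col : V → V → Fin 3}

lemma exists_missing_color (hcol : ∀ v, colorsAt col v ≠ univ) :
    ∃ m : V → Fin 3, ∀ u v, u ≠ v → col u v ≠ m u := by
  have h : ∀ u, ∃ c, c ∉ colorsAt col u := fun u => by
    by_contra! h
    exact hcol u (eq_univ_iff_forall.2 h)
  choose m hm using h
  refine ⟨m, fun u v huv h => hm u ?_⟩
  simp only [colorsAt, mem_filter, mem_univ, true_and]
  exact ⟨v, huv.symm, h⟩

lemma filter_missing_ne_subset_sdom (hsym : ∀ x y, col x y = col y x) {m : V → Fin 3}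
    (hm : ∀ u v, u ≠ v → col u v ≠ m u) {u v : V} {c : Fin 3} (huv : m u ≠ m v)
    (hu : m u ≠ c) (hv : m v ≠ c) : univ.filter (fun y => m y ≠ c) ⊆ sdom col {u, v} c := by
  intro y hy
  have hyc : m y ≠ c := (mem_filter.1 hy).2
  simp only [sdom, mem_filter, mem_univ, true_and]
  by_cases hyu : m u = m y
  · exact ⟨v, by simp, fun h => huv (h ▸ hyu), col_eq_of_missing hsym hm (hyu ▸ huv.symm) hv hyc⟩
  · exact ⟨u, by simp, fun h => hyu (h ▸ rfl), col_eq_of_missing hsym hm hyu hu hyc⟩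

def colorNeighbors (col : V → V → Fin 3) (x : V) (c : Fin 3) : Finset V :=
  (univ.erase x).filter (fun y => col x y = c)

section TwoColored

variable {b c : Fin 3}

lemma card_colorNeighbors_add_card_colorNeighbors (hbc : b ≠ c)
    (h2 : ∀ x y, x ≠ y → col x y = b ∨ col x y = c) (x : V) :
    #(colorNeighbors col x b) + #(colorNeighbors col x c) + 1 = Fintype.card V := by
  have hc : colorNeighbors col x c = (univ.erase x).filter (fun y => ¬col x y = b) :=
    filter_congr fun y hy => ⟨fun h h' => hbc (h'.symm.trans h),
      (h2 x y (ne_of_mem_erase hy).symm).resolve_left⟩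
  rw [colorNeighbors, hc, card_filter_add_card_filter_not, card_erase_of_mem (mem_univ x),
    card_univ]
  have : 0 < Fintype.card V := Fintype.card_pos_iff.2 ⟨x⟩
  omega

lemma card_le_card_filter_add_card_sdom_pair (hsym : ∀ x y, col x y = col y x) (hbc : b ≠ c)
    (h2 : ∀ x y, x ≠ y → col x y = b ∨ col x y = c) {x w : V} (hwx : w ≠ x) (hw : col x w = b) :
    Fintype.card V ≤
      #((colorNeighbors col x c).filter (fun y => col w y = c)) + #(sdom col {x, w} b) := by
  set T := (colorNeighbors col x c).filter (fun y => col w y = c)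
  -- `x` dominates its `b`-neighbours, `w` dominates `x` and the `c`-neighbours of `x` outside `T`
  have hsub : Tᶜ ⊆ sdom col {x, w} b := by
    intro y hy
    simp only [T, colorNeighbors, mem_compl, mem_filter, mem_erase, mem_univ, and_true,
      not_and] at hy
    simp only [sdom, mem_filter, mem_univ, true_and, mem_insert, mem_singleton,
      exists_eq_or_imp, exists_eq_left]
    by_cases hyx : y = x
    · exact Or.inr ⟨hwx.trans_eq hyx.symm, hyx ▸ hsym x w ▸ hw⟩
    rcases h2 x y (Ne.symm hyx) with hxy | hxy
    · exact Or.inl ⟨Ne.symm hyx, hxy⟩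
    have hwy : w ≠ y := fun h => hbc (hw.symm.trans (h ▸ hxy))
    exact Or.inr ⟨hwy, (h2 w y hwy).resolve_right (hy ⟨hyx, hxy⟩)⟩
  have := card_le_card hsub
  rw [card_compl] at this
  omega

lemma exists_sdom_pair_of_two_colored (hsym : ∀ x y, col x y = col y x) (hbc : b ≠ c)
    (h2 : ∀ x y, x ≠ y → col x y = b ∨ col x y = c) (hV : 2 ≤ Fintype.card V) :
    ∃ (d : Fin 3) (A : Finset V), #A ≤ 2 ∧ 2 * Fintype.card V ≤ 3 * #(sdom col A d) := by
  obtain ⟨x⟩ : Nonempty V := Fintype.card_pos_iff.1 (by omega)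
  by_contra! hA
  have hb : ∀ w ∈ colorNeighbors col x b,
      Fintype.card V + 1 ≤ 3 * #((colorNeighbors col x c).filter (fun y => col w y = c)) := by
    intro w hw
    simp only [colorNeighbors, mem_filter, mem_erase] at hw
    have := card_le_card_filter_add_card_sdom_pair hsym hbc h2 hw.1.1 hw.2
    have := hA b {x, w} card_le_two
    omega
  have hc : ∀ v ∈ colorNeighbors col x c,
      Fintype.card V + 1 ≤ 3 * #((colorNeighbors col x b).filter (fun y => col v y = b)) := by
    intro v hv
    simp only [colorNeighbors, mem_filter, mem_erase] at hv
    have := card_le_card_filter_add_card_sdom_pair hsym hbc.symm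
      (fun x y hxy => (h2 x y hxy).symm) hv.1.1 hv.2
    have := hA c {x, v} card_le_two
    omega
  have hsum := sum_card_filter_add_sum_card_filter_eq_mul hsym hbc
    (S := colorNeighbors col x b) (T := colorNeighbors col x c) fun w hw v hv => by
      simp only [colorNeighbors, mem_filter, mem_erase] at hw hv
      exact h2 w v fun h => hbc (hw.2.symm.trans (h ▸ hv.2))
  have hbsum := card_nsmul_le_sum _ _ _ hb
  have hcsum := card_nsmul_le_sum _ _ _ hc
  rw [← mul_sum, smul_eq_mul] at hbsum hcsum
  have := three_mul_mul_lt_add_mul_succ (card_colorNeighbors_add_card_colorNeighbors hbc h2 x) hV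
  nlinarith

end TwoColored

lemma exists_sdom_pair_of_missing_color (hsym : ∀ x y, col x y = col y x) {m : V → Fin 3}
    (hm : ∀ u v, u ≠ v → col u v ≠ m u) (hV : 2 ≤ Fintype.card V) :
    ∃ (c : Fin 3) (A : Finset V), #A ≤ 2 ∧ 2 * Fintype.card V ≤ 3 * #(sdom col A c) := by
  rcases exists_const_or_small_fiber m with ⟨d, hd⟩ | ⟨c, u, v, huv, hu, hv, hc⟩
  · obtain ⟨b, c, hbc, hbd, hcd⟩ := fin_three_exists_pair_ne d
    refine exists_sdom_pair_of_two_colored hsym hbc (fun x y hxy => ?_) hV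
    by_contra! h
    exact hm x y hxy (hd x ▸ fin_three_eq_of_ne hbc hbd hcd h.1 h.2)
  · refine ⟨c, {u, v}, card_le_two, ?_⟩
    have hsub := card_le_card (filter_missing_ne_subset_sdom hsym hm huv hu hv)
    have hsplit := card_filter_add_card_filter_not (s := univ) (fun y => m y = c)
    simp only [card_univ, ← ne_eq] at hsplit
    omega

end

theorem stmt13 (n : ℕ) (hn : 2 ≤ n) (col : Fin n → Fin n → Fin 3)
    (hsym : ∀ x y, col x y = col y x)
    (hcol : ∀ v, colorsAt col v ≠ Finset.univ) :
    ∃ (c : Fin 3) (A : Finset (Fin n)),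
      A.card ≤ 4 ∧ 2 * n ≤ 3 * (sdom col A c).card := by
  obtain ⟨m, hm⟩ := exists_missing_color hcol
  obtain ⟨c, A, hA, hdom⟩ :=
    exists_sdom_pair_of_missing_color hsym hm (by rwa [Fintype.card_fin])
  rw [Fintype.card_fin] at hdom
  exact ⟨c, A, hA.trans (by norm_num), hdom⟩
end
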